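/- Let p be a prime, χ a nontrivial (hence primitive) Dirichlet character modulo p, ℓ ≥ 1 an integer, q' a positive integer with p ∤ q', and set q = p^ℓ · q'. Let a be an integer with gcd(a, q) = 1 and m an integer. Then Σ_{u=0}^{pq−1} χ(u) · e(−a·u/q + m·u/(pq)) equals q · τ(χ) · χ(q') · \overline{χ}((m − a·p)/p^ℓ) if q divides m − a·p (in which case (m − a·p)/p^ℓ is an integer), and equals 0 otherwise. -/

import Mathlib

/-!
Write `N = m - ap`, so that the phase is `N u / (pq)`, and split `u = pk + s` with `s < p`
and `k < q`. Since `χ(u) = χ(s)`, the sum factors as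
`(Σ_k e(Nk/q)) · Σ_s χ(s) e(Ns/(pq))`.
The first factor is `q` or `0` according as `q ∣ N`. If `N = qM`, the second factor is the
twisted Gauss sum `Σ_s χ(s) e(Ms/p) = χ̄(M) τ(χ)`, which also holds for `p ∣ M` because `χ` is
nontrivial; finally `N / p^ℓ = q' M` and `χ(q') χ̄(q') = 1` since `p ∤ q'`.
-/

open Finset

noncomputable def e (x : ℝ) : ℂ := Complex.exp (2 * Real.pi * Complex.I * x)

lemma e_add (x y : ℝ) : e (x + y) = e x * e y := by
  simp only [e, Complex.ofReal_add, mul_add, Complex.exp_add]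

lemma e_intCast_div (N : ℕ) [NeZero N] (k : ℤ) : e (k / N) = ZMod.stdAddChar (k : ZMod N) := by
  rw [ZMod.stdAddChar_coe, e]
  push_cast
  ring_nf

lemma Finset.sum_range_mul_eq_sum_sum {M : Type*} [AddCommMonoid M] (f : ℕ → M) (m n : ℕ) :
    ∑ u ∈ range (m * n), f u = ∑ k ∈ range n, ∑ s ∈ range m, f (m * k + s) := by
  induction n with
  | zero => simp
  | succ n ih => rw [mul_add_one, sum_range_add, ih, sum_range_succ]

lemma ZMod.sum_range_natCast {M : Type*} [AddCommMonoid M] (N : ℕ) [NeZero N]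
    (g : ZMod N → M) :
    ∑ u ∈ range N, g u = ∑ x : ZMod N, g x := by
  refine sum_nbij' (↑) ZMod.val (by simp) (fun x _ => mem_range.2 x.val_lt)
    (fun u hu => ZMod.val_cast_of_lt (mem_range.1 hu)) (fun x _ => ZMod.natCast_zmod_val x)
    (fun _ _ => rfl)

lemma sum_range_mul_mul_e_eq_mul_sum (p q : ℕ) [NeZero p] (f : ZMod p → ℂ) (N : ℤ) :
    ∑ u ∈ range (p * q), f u * e (N * u / (p * q)) =
      (∑ k ∈ range q, e (N * k / q)) * ∑ s ∈ range p, f s * e (N * s / (p * q)) := by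
  have hp : (p : ℝ) ≠ 0 := NeZero.ne _
  rw [sum_range_mul_eq_sum_sum, sum_mul_sum]
  congr! 2 with k - s -
  have hcast : ((p * k + s : ℕ) : ZMod p) = s := by simp
  have hphase : (N * (p * k + s : ℕ) / (p * q) : ℝ) = N * k / q + N * s / (p * q) := by
    push_cast
    field_simp
  rw [hcast, hphase, e_add]
  ring

lemma sum_range_e_mul_div (n : ℕ) [NeZero n] (N : ℤ) :
    ∑ k ∈ range n, e (N * k / n) = if (n : ℤ) ∣ N then (n : ℂ) else 0 := by
  have hterm (k : ℕ) : e (N * k / n) = ZMod.stdAddChar ((k : ZMod n) * (N : ZMod n)) := by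
    have h := e_intCast_div n (N * k)
    push_cast at h
    rw [mul_comm (k : ZMod n), ← h]
  simp only [hterm, ZMod.sum_range_natCast n (fun x => ZMod.stdAddChar (x * (N : ZMod n))),
    AddChar.sum_mulShift _ (ZMod.isPrimitive_stdAddChar n), ZMod.intCast_zmod_eq_zero_iff_dvd,
    ZMod.card, Nat.cast_ite, Nat.cast_zero]

lemma gaussSum_mulShift_of_ne_one {F R : Type*} [Field F] [Fintype F] [CommRing R] [IsDomain R]
    {χ : MulChar F R} (hχ : χ ≠ 1) (ψ : AddChar F R) (a : F) :
    gaussSum χ (ψ.mulShift a) = χ⁻¹ a * gaussSum χ ψ := by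
  rcases eq_or_ne a 0 with rfl | ha
  · simp [gaussSum_one_right hχ, MulChar.map_zero]
  · simpa using gaussSum_mulShift_eq χ ψ (Units.mk0 a ha)

lemma sum_range_mulChar_mul_e_eq_gaussSum (N : ℕ) [NeZero N] (χ : MulChar (ZMod N) ℂ)
    (M : ℤ) :
    ∑ s ∈ range N, χ s * e (M * s / N) = gaussSum χ (ZMod.stdAddChar.mulShift M) := by
  have hterm (s : ℕ) : e (M * s / N) = ZMod.stdAddChar.mulShift (M : ZMod N) s := by
    have h := e_intCast_div N (M * s)
    push_cast at h
    rw [AddChar.mulShift_apply, ← h]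
  simp only [hterm]
  exact ZMod.sum_range_natCast N (fun x => χ x * ZMod.stdAddChar.mulShift (M : ZMod N) x)

lemma sum_range_mulChar_mul_e_mul_div {p : ℕ} [Fact p.Prime] {χ : MulChar (ZMod p) ℂ}
    (hχ : χ ≠ 1) (M : ℤ) :
    ∑ s ∈ range p, χ s * e (M * s / p) = χ⁻¹ M * ∑ s ∈ range p, χ s * e (s / p) := by
  have h1 := sum_range_mulChar_mul_e_eq_gaussSum p χ 1
  simp only [Int.cast_one, one_mul, AddChar.mulShift_one] at h1
  rw [sum_range_mulChar_mul_e_eq_gaussSum, h1, gaussSum_mulShift_of_ne_one hχ]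

theorem char_sum_ramified_general (p : ℕ) (hp : p.Prime) (χ : DirichletCharacter ℂ p) (hχ : χ ≠ 1)
    (ℓ : ℕ) (q' : ℕ) (hpq' : ¬ p ∣ q')
    (q : ℕ) (hqdef : q = p ^ ℓ * q')
    (a : ℤ) (m : ℤ) :
    (∑ u ∈ Finset.range (p * q), χ (u : ZMod p) *
        e (-(a : ℝ) * u / q + (m : ℝ) * u / (p * q))) =
      if (q : ℤ) ∣ (m - a * p) then
        (q : ℂ) * (∑ u ∈ Finset.range p, χ (u : ZMod p) * e ((u : ℝ) / p)) *
          χ ((q' : ℕ) : ZMod p) *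
          (starRingEnd ℂ) (χ (((m - a * p) / (p : ℤ) ^ ℓ : ℤ) : ZMod p))
      else 0 := by
  have := Fact.mk hp
  have hq' : q' ≠ 0 := by rintro rfl; exact hpq' (dvd_zero p)
  have hq : q ≠ 0 := hqdef ▸ mul_ne_zero (pow_ne_zero _ hp.ne_zero) hq'
  have := NeZero.mk hq
  have hpR : (p : ℝ) ≠ 0 := NeZero.ne _
  have hphase (u : ℕ) :
      -(a : ℝ) * u / q + m * u / (p * q) = ((m - a * p : ℤ) : ℝ) * u / (p * q) := by
    push_cast; field_simp; ring
  simp only [hphase, sum_range_mul_mul_e_eq_mul_sum, sum_range_e_mul_div]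
  split_ifs with hdvd
  · obtain ⟨M, hM⟩ := hdvd
    have hphase' (s : ℕ) : ((m - a * p : ℤ) * s / (p * q) : ℝ) = M * s / p := by
      rw [hM]; push_cast; field_simp
    have hquot : (m - a * p) / (p : ℤ) ^ ℓ = q' * M := by
      rw [hM, hqdef, Nat.cast_mul, Nat.cast_pow, mul_assoc,
        Int.mul_ediv_cancel_left _ (pow_ne_zero _ (by exact_mod_cast hp.ne_zero))]
    have hunit : χ q' * χ⁻¹ q' = 1 := by
      rw [MulChar.inv_apply', ← map_mul,
        mul_inv_cancel₀ ((ZMod.natCast_eq_zero_iff _ _).not.2 hpq'), map_one]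
    simp only [hphase', sum_range_mulChar_mul_e_mul_div hχ, hquot, ← Complex.star_def,
      MulChar.star_apply', Int.cast_mul, Int.cast_natCast, map_mul]
    linear_combination -(q * χ⁻¹ M * ∑ s ∈ range p, χ s * e (s / p)) * hunit
  · exact zero_mul _

/-- Evaluation of the complete character sum modulo `pq` when `p^ℓ ∥ q`, `ℓ ≥ 1`:
`Σ_{u mod pq} χ(u) e(-au/q + mu/(pq))` equals `q τ(χ) χ(q') \bar{χ}((m - ap)/p^ℓ)` if
`q ∣ m - ap`, and `0` otherwise. -/
theorem char_sum_ramified (p : ℕ) (hp : p.Prime) (χ : DirichletCharacter ℂ p) (hχ : χ ≠ 1)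
    (ℓ : ℕ) (hℓ : 1 ≤ ℓ) (q' : ℕ) (hq' : 0 < q') (hpq' : ¬ p ∣ q')
    (q : ℕ) (hqdef : q = p ^ ℓ * q')
    (a : ℤ) (ha : Int.gcd a q = 1) (m : ℤ) :
    (∑ u ∈ Finset.range (p * q), χ (u : ZMod p) *
        e (-(a : ℝ) * u / q + (m : ℝ) * u / (p * q))) =
      if (q : ℤ) ∣ (m - a * p) then
        (q : ℂ) * (∑ u ∈ Finset.range p, χ (u : ZMod p) * e ((u : ℝ) / p)) *
          χ ((q' : ℕ) : ZMod p) *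
          (starRingEnd ℂ) (χ (((m - a * p) / (p : ℤ) ^ ℓ : ℤ) : ZMod p))
      else 0 :=
  char_sum_ramified_general p hp χ hχ ℓ q' hpq' q hqdef a m
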